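/- Let S ⊆ G be contained in a single angle class (i.e., N_R divides β'−β for all (β,τ,f), (β',τ',f') ∈ S). Then for arbitrary signals s_1, …, s_{N_T} ∈ ℂ^{N_t}, the Gram matrix of the corresponding columns of the scaled measurement matrix admits the representation Ã_S^* Ã_S = Σ_{i,j=1}^{N_T} Σ_{a,b=1}^{N_t} conj(s_{(i,a)})·s_{(j,b)}·Y^{(i,a),(j,b)}, where s_{(i,a)} denotes the a-th entry of s_i. -/

import Mathlib

open MeasureTheory ProbabilityTheory Complex
open scoped ENNReal Matrix

noncomputable section

namespace MIMO

/-- Squared ℓ²-norm of a complex vector. -/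
def l2normSq {ι : Type*} [Fintype ι] (x : ι → ℂ) : ℝ := ∑ i, ‖x i‖ ^ 2

/-- ℓ²-norm of a complex vector. -/
def l2norm {ι : Type*} [Fintype ι] (x : ι → ℂ) : ℝ := Real.sqrt (l2normSq x)

/-- ℓ¹-norm of a complex vector. -/
def l1norm {ι : Type*} [Fintype ι] (x : ι → ℂ) : ℝ := ∑ i, ‖x i‖

/-- Hermitian inner product, conjugate-linear in the first argument. -/
def cInner {ι : Type*} [Fintype ι] (x y : ι → ℂ) : ℂ := ∑ i, (starRingEnd ℂ) (x i) * y i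

/-- Spectral norm (ℓ² → ℓ² operator norm) of a complex matrix. -/
def specNorm {m n : Type*} [Fintype m] [Fintype n] (A : Matrix m n ℂ) : ℝ :=
  sSup ((fun x => l2norm (A.mulVec x)) '' {x | l2norm x ≤ 1})

/-- Frobenius norm of a complex matrix. -/
def frobNorm {m n : Type*} [Fintype m] [Fintype n] (A : Matrix m n ℂ) : ℝ :=
  Real.sqrt (∑ i, ∑ j, ‖A i j‖ ^ 2)

/-- The standard complex Gaussian measure on ℂ: real and imaginary parts are
independent real centered Gaussians of variance 1/2. -/
def stdCGaussian : Measure ℂ :=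
  Measure.map (⇑Complex.measurableEquivRealProd.symm)
    ((gaussianReal 0 (1/2)).prod (gaussianReal 0 (1/2)))

/-- A mean-zero complex Gaussian measure of variance σ² on ℂ. -/
def cGaussian (σ : ℝ) : Measure ℂ :=
  Measure.map (fun z : ℂ => (σ : ℂ) * z) stdCGaussian

/-- Complex Gaussian noise (independent entries, variance σ²). -/
def noiseMeasure (ι : Type*) [Fintype ι] (σ : ℝ) : Measure (ι → ℂ) :=
  Measure.pi (fun _ => cGaussian σ)

/-- The Steinhaus (uniform) distribution on the complex unit circle. -/
def steinhaus : Measure ℂ :=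
  Measure.map (fun θ : ℝ => Complex.exp (θ * Complex.I))
    ((ENNReal.ofReal (2 * Real.pi))⁻¹ • volume.restrict (Set.Ico (0:ℝ) (2 * Real.pi)))

/-- A Steinhaus vector: independent entries uniform on the complex unit circle. -/
def steinhausPi (ι : Type*) [Fintype ι] : Measure (ι → ℂ) := Measure.pi (fun _ => steinhaus)

/-- The joint distribution of the NT independent standard complex Gaussian signals in ℂ^{Nt}. -/
def signalMeasure (NT Nt : ℕ) : Measure (Fin NT → Fin Nt → ℂ) :=
  Measure.pi (fun _ => Measure.pi (fun _ => stdCGaussian))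

/-- The angle–delay–Doppler parameter grid `[N_T N_R] × [N_t] × [N_t]`. -/
abbrev Grid (NT NR Nt : ℕ) := Fin (NT * NR) × Fin Nt × Fin Nt

/-- `e^{2πi x}`. -/
def ePhase (x : ℝ) : ℂ := Complex.exp (((2 * Real.pi * x : ℝ) : ℂ) * Complex.I)

open Fin.NatCast in
/-- The modulated circulant shift `M_f T_τ` applied to a signal:
`(M_f T_τ s)_k = e^{2πi f (k-1)/N_t} s_{k-τ}` (1-based indices; `k.val = k-1`). -/
def modShift (Nt : ℕ) [NeZero Nt] (τ f : ℕ) (s : Fin Nt → ℂ) (k : Fin Nt) : ℂ :=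
  ePhase ((f : ℝ) * (k.1 : ℝ) / (Nt : ℝ)) * s (k - (τ : Fin Nt))

/-- The column `A_Θ` of the MIMO measurement matrix, `Θ = (β,τ,f)`;
its `j`-th length-`N_t` block is
`e^{2πi β (j-1)/N_R} ∑_i e^{2πi β (i-1)/(N_T N_R)} M_f T_τ s_i`. -/
def colA (NT NR Nt : ℕ) [NeZero Nt] (sg : Fin NT → Fin Nt → ℂ)
    (Θ : Grid NT NR Nt) (p : Fin NR × Fin Nt) : ℂ :=
  ePhase (((Θ.1.1 : ℝ) + 1) * (p.1.1 : ℝ) / (NR : ℝ)) *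
    ∑ i : Fin NT, ePhase (((Θ.1.1 : ℝ) + 1) * (i.1 : ℝ) / ((NT : ℝ) * (NR : ℝ))) *
      modShift Nt (Θ.2.1.1 + 1) (Θ.2.2.1 + 1) (sg i) p.2

/-- The column `Ã_Θ = (N_T N_R N_t)^{-1/2} A_Θ` of the scaled measurement matrix. -/
def colAt (NT NR Nt : ℕ) [NeZero Nt] (sg : Fin NT → Fin Nt → ℂ)
    (Θ : Grid NT NR Nt) (p : Fin NR × Fin Nt) : ℂ :=
  ((Real.sqrt ((NT : ℝ) * (NR : ℝ) * (Nt : ℝ)) : ℂ))⁻¹ * colA NT NR Nt sg Θ p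

/-- The MIMO measurement matrix `A`. -/
def Amat (NT NR Nt : ℕ) [NeZero Nt] (sg : Fin NT → Fin Nt → ℂ) :
    Matrix (Fin NR × Fin Nt) (Grid NT NR Nt) ℂ := fun p Θ => colA NT NR Nt sg Θ p

/-- The scaled MIMO measurement matrix `Ã = (N_T N_R N_t)^{-1/2} A`. -/
def Atil (NT NR Nt : ℕ) [NeZero Nt] (sg : Fin NT → Fin Nt → ℂ) :
    Matrix (Fin NR × Fin Nt) (Grid NT NR Nt) ℂ := fun p Θ => colAt NT NR Nt sg Θ p

/-- The Gram matrix `Ã_T^* Ã_T` of the columns of `Ã` indexed by a subset `T`. -/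
def gram (NT NR Nt : ℕ) [NeZero Nt] (sg : Fin NT → Fin Nt → ℂ)
    (T : Finset (Grid NT NR Nt)) : Matrix {Θ // Θ ∈ T} {Θ // Θ ∈ T} ℂ :=
  fun Θ Θ' => cInner (colAt NT NR Nt sg Θ.1) (colAt NT NR Nt sg Θ'.1)

/-- `S_{[β]}`: the elements of `S` whose angle parameter is equivalent to `β`
(equivalent ⟺ difference divisible by `N_R`). -/
def classOf (NT NR Nt : ℕ) (S : Finset (Grid NT NR Nt)) (β : Fin (NT * NR)) :
    Finset (Grid NT NR Nt) :=
  S.filter (fun Θ => ((Θ.1.1 : ℤ) - (β.1 : ℤ)) % (NR : ℤ) = 0)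

/-- A support set `S` is `η`-balanced if `|S_{[β]}| ≤ η |S| / N_R` for every angle class. -/
def IsBalanced (NT NR Nt : ℕ) (S : Finset (Grid NT NR Nt)) (η : ℝ) : Prop :=
  ∀ β : Fin (NT * NR), ((classOf NT NR Nt S β).card : ℝ) ≤ η * (S.card : ℝ) / (NR : ℝ)

/-- The restricted isometry constant `δ_s(A)`: the smallest `δ ≥ 0` such that
`(1-δ)‖x‖₂² ≤ ‖Ax‖₂² ≤ (1+δ)‖x‖₂²` for all `s`-sparse `x`. -/
def ripConst {m n : Type*} [Fintype m] [Fintype n] (s : ℕ) (A : Matrix m n ℂ) : ℝ :=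
  sInf {δ : ℝ | 0 ≤ δ ∧ ∀ x : n → ℂ, (Function.support x).ncard ≤ s →
    (1 - δ) * l2normSq x ≤ l2normSq (A.mulVec x) ∧
      l2normSq (A.mulVec x) ≤ (1 + δ) * l2normSq x}


/-- The matrix `Y^{(i,a),(j,b)}` indexed by a set `S` within a single angle class:
`[Y^{(i,a),(j,b)}]_{Θ,Θ'} = δ^{~N_t}_{a-b,τ'-τ} (N_T N_t)⁻¹
  e^{2πi (f'-f)(τ+a-1)/N_t} e^{2πi (β'(j-1)-β(i-1))/(N_T N_R)}` (1-based parameters). -/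
def Ymat (NT NR Nt : ℕ) (S : Finset (Grid NT NR Nt))
    (i : Fin NT) (a : Fin Nt) (j : Fin NT) (b : Fin Nt) :
    Matrix {Θ // Θ ∈ S} {Θ // Θ ∈ S} ℂ :=
  fun Θ Θ' =>
    (if (((a.1 : ℤ) - (b.1 : ℤ)) - ((Θ'.1.2.1.1 : ℤ) - (Θ.1.2.1.1 : ℤ))) % (Nt : ℤ) = 0
      then 1 else 0) *
    (((NT : ℂ) * (Nt : ℂ)))⁻¹ *
    ePhase (((Θ'.1.2.2.1 : ℝ) - (Θ.1.2.2.1 : ℝ)) * ((Θ.1.2.1.1 : ℝ) + (a.1 : ℝ) + 1) / (Nt : ℝ)) *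
    ePhase ((((Θ'.1.1.1 : ℝ) + 1) * (j.1 : ℝ) - ((Θ.1.1.1 : ℝ) + 1) * (i.1 : ℝ)) /
      ((NT : ℝ) * (NR : ℝ)))

/-!
All columns indexed by `S` lie in one angle class, so the receive phases `e^{2πi β (j-1)/N_R}`
of any two of them coincide and the `N_R` receive blocks only contribute a factor `N_R`. What
remains is an inner product of sums of modulated shifts `M_f T_τ s_i`; substituting `k = a + τ`
pairs `s_i(a)` with `s_j(a + τ - τ')`, which is the Kronecker delta of `Y`.
-/

lemma ePhase_add (x y : ℝ) : ePhase (x + y) = ePhase x * ePhase y := by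
  rw [ePhase, ePhase, ePhase, ← Complex.exp_add]
  push_cast
  ring_nf

lemma ePhase_intCast (n : ℤ) : ePhase n = 1 := by
  rw [ePhase, ← Complex.exp_int_mul_two_pi_mul_I n]
  push_cast
  ring_nf

lemma ePhase_add_intCast (x : ℝ) (n : ℤ) : ePhase (x + n) = ePhase x := by
  rw [ePhase_add, ePhase_intCast, mul_one]

lemma conj_ePhase_mul_ePhase (x y : ℝ) :
    starRingEnd ℂ (ePhase x) * ePhase y = ePhase (y - x) := by
  rw [ePhase, ePhase, ePhase, ← Complex.exp_conj, ← Complex.exp_add]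
  simp only [map_mul, Complex.conj_ofReal, Complex.conj_I]
  push_cast
  ring_nf

lemma ePhase_intCast_mul_div_of_modEq {n v w : ℕ} (m : ℤ) (h : v ≡ w [MOD n]) :
    ePhase (m * v / n) = ePhase (m * w / n) := by
  rcases Nat.eq_zero_or_pos n with rfl | hn
  · simp
  obtain ⟨k, hk⟩ := h.dvd
  have hw : (w : ℝ) = v + n * k := by
    have hkR : (w : ℝ) - v = n * k := by exact_mod_cast hk
    linarith
  rw [hw, ← ePhase_add_intCast (m * v / n) (m * k)]
  congr 1
  push_cast
  field_simp

section InnerProduct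

variable {ι κ α : Type*} [Fintype ι] [Fintype κ] [Fintype α]

lemma cInner_mul_left_mul_left (c d : ℂ) (x y : ι → ℂ) :
    cInner (fun p => c * x p) (fun p => d * y p) = starRingEnd ℂ c * d * cInner x y := by
  simp only [cInner, map_mul, Finset.mul_sum]
  exact Finset.sum_congr rfl fun _ _ => by ring

lemma cInner_kronecker (p q : κ → ℂ) (x y : ι → ℂ) :
    cInner (fun rk : κ × ι => p rk.1 * x rk.2) (fun rk => q rk.1 * y rk.2) =
      cInner p q * cInner x y := by
  simp only [cInner, map_mul, Finset.sum_mul_sum, Fintype.sum_prod_type]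
  exact Finset.sum_congr rfl fun _ _ => Finset.sum_congr rfl fun _ _ => by ring

lemma cInner_sum_mul_sum (c d : α → ℂ) (x y : α → ι → ℂ) :
    cInner (fun k => ∑ i, c i * x i k) (fun k => ∑ j, d j * y j k) =
      ∑ i, ∑ j, starRingEnd ℂ (c i) * d j * cInner (x i) (y j) := by
  simp only [cInner, map_sum, map_mul, Finset.sum_mul_sum]
  simp only [Finset.mul_sum]
  rw [Finset.sum_comm]
  refine Finset.sum_congr rfl fun _ _ => ?_
  rw [Finset.sum_comm]
  exact Finset.sum_congr rfl fun _ _ => Finset.sum_congr rfl fun _ _ => by ring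

lemma cInner_ePhase_of_sub_eq (n : ℕ) {x x' : ℝ} (m : ℤ) (h : x' - x = n * m) :
    cInner (fun r : Fin n => ePhase (x * r / n)) (fun r => ePhase (x' * r / n)) = n := by
  have hterm : ∀ r : Fin n,
      starRingEnd ℂ (ePhase (x * r / n)) * ePhase (x' * r / n) = 1 := fun r => by
    have hn : (n : ℝ) ≠ 0 := Nat.cast_ne_zero.mpr r.pos.ne'
    rw [conj_ePhase_mul_ePhase, ← ePhase_intCast (m * r)]
    congr 1
    push_cast
    field_simp
    linear_combination (r : ℝ) * h
  simp [cInner, hterm]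

end InnerProduct

open Fin.NatCast in
lemma cInner_modShift (n : ℕ) [NeZero n] (τ f τ' f' : ℕ) (s t : Fin n → ℂ) :
    cInner (modShift n τ f s) (modShift n τ' f' t) =
      ∑ a, starRingEnd ℂ (s a) * t (a + τ - τ') *
        ePhase (((f' : ℝ) - f) * (τ + a) / n) := by
  rw [cInner, ← Equiv.sum_comp (Equiv.addRight (τ : Fin n))]
  refine Finset.sum_congr rfl fun a _ => ?_
  have hval : (a + (τ : Fin n)).val ≡ τ + a [MOD n] := by
    rw [Fin.val_add, Fin.val_natCast, add_comm τ]
    exact (Nat.mod_modEq _ _).trans (Nat.ModEq.add_left _ (Nat.mod_modEq _ _))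
  have hphase := ePhase_intCast_mul_div_of_modEq ((f' : ℤ) - f) hval
  push_cast at hphase
  simp only [modShift, Equiv.coe_addRight, add_sub_cancel_right, map_mul]
  rw [← hphase, sub_mul, sub_div, ← conj_ePhase_mul_ePhase]
  ring

lemma val_sub_sub_emod_eq_zero_iff {n : ℕ} [NeZero n] (a b τ τ' : Fin n) :
    ((a : ℤ) - b - ((τ' : ℤ) - τ)) % n = 0 ↔ b = a + τ - τ' := by
  obtain ⟨m, rfl⟩ : ∃ m, n = m + 1 := Nat.exists_eq_succ_of_ne_zero (NeZero.ne n)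
  have hcast : ∀ x : Fin (m + 1), ((x.1 : ℕ) : ZMod (m + 1)) = x :=
    fun x => ZMod.natCast_zmod_val (n := m + 1) x
  rw [EuclideanDomain.mod_eq_zero, ← ZMod.intCast_zmod_eq_zero_iff_dvd]
  push_cast
  rw [hcast, hcast, hcast, hcast]
  change a - b - (τ' - τ) = 0 ↔ b = a + τ - τ'
  constructor <;> intro h
  · open Fin.CommRing in linear_combination -h
  · open Fin.CommRing in rw [h]; ring

lemma sum_mul_Ymat_apply (NT NR Nt : ℕ) [NeZero Nt] (S : Finset (Grid NT NR Nt))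
    (i : Fin NT) (a : Fin Nt) (j : Fin NT) (x : Fin Nt → ℂ) (Θ Θ' : {Θ // Θ ∈ S}) :
    ∑ b, x b * Ymat NT NR Nt S i a j b Θ Θ' =
      x (a + Θ.1.2.1 - Θ'.1.2.1) * ((NT : ℂ) * Nt)⁻¹ *
        ePhase (((Θ'.1.2.2.1 : ℝ) - Θ.1.2.2.1) * ((Θ.1.2.1.1 : ℝ) + a.1 + 1) / Nt) *
        ePhase ((((Θ'.1.1.1 : ℝ) + 1) * j.1 - ((Θ.1.1.1 : ℝ) + 1) * i.1) / (NT * NR)) := by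
  simp only [Ymat, val_sub_sub_emod_eq_zero_iff, ite_mul, one_mul, zero_mul, mul_ite, mul_zero,
    Finset.sum_ite_eq', Finset.mem_univ, if_true]
  ring

lemma cInner_colAt_of_emod_eq_zero (NT NR Nt : ℕ) [NeZero NR] [NeZero Nt]
    (sg : Fin NT → Fin Nt → ℂ) (Θ Θ' : Grid NT NR Nt)
    (h : ((Θ'.1.1 : ℤ) - Θ.1.1) % NR = 0) :
    cInner (colAt NT NR Nt sg Θ) (colAt NT NR Nt sg Θ') =
      ((NT : ℂ) * Nt)⁻¹ * ∑ i : Fin NT, ∑ j : Fin NT,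
        starRingEnd ℂ (ePhase (((Θ.1.1 : ℝ) + 1) * i / (NT * NR))) *
          ePhase (((Θ'.1.1 : ℝ) + 1) * j / (NT * NR)) *
          cInner (modShift Nt (Θ.2.1.1 + 1) (Θ.2.2.1 + 1) (sg i))
            (modShift Nt (Θ'.2.1.1 + 1) (Θ'.2.2.1 + 1) (sg j)) := by
  obtain ⟨m, hm⟩ := Int.dvd_of_emod_eq_zero h
  have hblock := cInner_ePhase_of_sub_eq NR (x := (Θ.1.1 : ℝ) + 1) (x' := (Θ'.1.1 : ℝ) + 1) m
    (by rw [add_sub_add_right_eq_sub]; exact_mod_cast hm)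
  have hsplit := cInner_kronecker (fun r : Fin NR => ePhase (((Θ.1.1 : ℝ) + 1) * r / NR))
    (fun r => ePhase (((Θ'.1.1 : ℝ) + 1) * r / NR))
    (fun k => ∑ i : Fin NT, ePhase (((Θ.1.1 : ℝ) + 1) * i / (NT * NR)) *
      modShift Nt (Θ.2.1.1 + 1) (Θ.2.2.1 + 1) (sg i) k)
    (fun k => ∑ j : Fin NT, ePhase (((Θ'.1.1 : ℝ) + 1) * j / (NT * NR)) *
      modShift Nt (Θ'.2.1.1 + 1) (Θ'.2.2.1 + 1) (sg j) k)
  rw [hblock, cInner_sum_mul_sum] at hsplit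
  have hscale : starRingEnd ℂ ((Real.sqrt ((NT : ℝ) * NR * Nt) : ℂ)⁻¹) *
      (Real.sqrt ((NT : ℝ) * NR * Nt) : ℂ)⁻¹ * NR = ((NT : ℂ) * Nt)⁻¹ := by
    have hNR : (NR : ℂ) ≠ 0 := Nat.cast_ne_zero.mpr (NeZero.ne NR)
    rw [map_inv₀, Complex.conj_ofReal, ← mul_inv, ← Complex.ofReal_mul,
      Real.mul_self_sqrt (by positivity)]
    push_cast
    field_simp
  unfold colAt
  rw [cInner_mul_left_mul_left,
    show cInner (colA NT NR Nt sg Θ) (colA NT NR Nt sg Θ') = _ from hsplit, ← hscale]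
  ring

open Fin.NatCast in
theorem stmt16_general (NT NR Nt : ℕ) [NeZero NR] [NeZero Nt]
    (sg : Fin NT → Fin Nt → ℂ) (S : Finset (Grid NT NR Nt))
    (hclass : ∀ Θ ∈ S, ∀ Θ' ∈ S, ((Θ'.1.1 : ℤ) - (Θ.1.1 : ℤ)) % (NR : ℤ) = 0) :
    gram NT NR Nt sg S =
      ∑ i : Fin NT, ∑ j : Fin NT, ∑ a : Fin Nt, ∑ b : Fin Nt,
        ((starRingEnd ℂ) (sg i a) * sg j b) • Ymat NT NR Nt S i a j b := by
  ext ⟨⟨β, τ, f⟩, hΘ⟩ ⟨⟨β', τ', f'⟩, hΘ'⟩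
  have hshift : ∀ a : Fin Nt,
      a + ((τ.1 + 1 : ℕ) : Fin Nt) - ((τ'.1 + 1 : ℕ) : Fin Nt) = a + τ - τ' := fun a => by
    push_cast [Fin.cast_val_eq_self]
    abel
  have hphase : ∀ a : Fin Nt,
      ePhase ((((f'.1 + 1 : ℕ) : ℝ) - (f.1 + 1 : ℕ)) * ((τ.1 + 1 : ℕ) + a.1) / Nt) =
        ePhase (((f'.1 : ℝ) - f.1) * ((τ.1 : ℝ) + a.1 + 1) / Nt) :=
    fun a => by congr 1; push_cast; ring
  simp only [Matrix.sum_apply, Matrix.smul_apply, smul_eq_mul, mul_assoc]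
  simp only [← Finset.mul_sum, sum_mul_Ymat_apply]
  rw [gram, cInner_colAt_of_emod_eq_zero NT NR Nt sg _ _ (hclass _ hΘ _ hΘ')]
  simp only [cInner_modShift, hshift, hphase, conj_ePhase_mul_ePhase, sub_div, Finset.mul_sum]
  refine Finset.sum_congr rfl fun i _ => Finset.sum_congr rfl fun j _ =>
    Finset.sum_congr rfl fun a _ => ?_
  ring

/-- chaos representation of the Gram matrix for a set in one angle class
(equation (3.14) of the paper). -/
theorem stmt16 (NT NR Nt : ℕ) [NeZero NT] [NeZero NR] [NeZero Nt]
    (sg : Fin NT → Fin Nt → ℂ) (S : Finset (Grid NT NR Nt))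
    (hclass : ∀ Θ ∈ S, ∀ Θ' ∈ S, ((Θ'.1.1 : ℤ) - (Θ.1.1 : ℤ)) % (NR : ℤ) = 0) :
    gram NT NR Nt sg S =
      ∑ i : Fin NT, ∑ j : Fin NT, ∑ a : Fin Nt, ∑ b : Fin Nt,
        ((starRingEnd ℂ) (sg i a) * sg j b) • Ymat NT NR Nt S i a j b :=
  stmt16_general NT NR Nt sg S hclass

end MIMO
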